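/- arXiv:1402.2597 — 2 statements merged into one kernel-verified Lean document; each statement's English description precedes it below -/
import Mathlib

section
/- Let 𝔓 be a simplicial affine convex polygonal semigroup whose defining polygon F meets the extremal ray τ_1 in a single vertex P_1. Let j be the least positive integer such that j·[P_1,P_t] ∩ (j+1)·[P_1,P_2] ≠ ∅ (where P_t, P_2 are the vertices adjacent to P_1), set {V_1} = j·[P_1,P_t] ∩ (j+1)·[P_1,P_2], and define ℬ_1 = {D + λ n_1 : D ∈ [jP_1, V_1], λ ∈ ℚ_{≥0}} ∩ 𝒞, where n_1 is the minimal-norm element of 𝔓 on τ_1. Then for every P ∈ ℬ_1 \ 𝔓 one has P + n_1 ∉ 𝔓, and consequently 𝔓 ∩ ℬ_1 = 𝔓̄ ∩ ℬ_1. -/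
open Set
open scoped Pointwise

/-- Coercion of a lattice point of `ℕ²` into `ℚ²`. -/
def toQ (x : Fin 2 → ℕ) : Fin 2 → ℚ := fun i => (x i : ℚ)

/-- The rational cone `L_{ℚ≥}(G)` generated by a subset `G ⊆ ℚ²`. -/
def coneQ (G : Set (Fin 2 → ℚ)) : Set (Fin 2 → ℚ) :=
  {x | ∃ (n : ℕ) (q : Fin n → ℚ) (f : Fin n → (Fin 2 → ℚ)),
    (∀ i, 0 ≤ q i) ∧ (∀ i, f i ∈ G) ∧ x = ∑ i, q i • f i}

/-- The ray from the origin through `v ∈ ℚ²`. -/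
def rayQ (v : Fin 2 → ℚ) : Set (Fin 2 → ℚ) := {x | ∃ q : ℚ, 0 ≤ q ∧ x = q • v}

/-- The lattice points on the ray from the origin through `v`. -/
def rayN (v : Fin 2 → ℕ) : Set (Fin 2 → ℕ) := {x | toQ x ∈ rayQ (toQ v)}

/-- Square of the Euclidean norm of a lattice point. -/
def normSq (x : Fin 2 → ℕ) : ℕ := x 0 ^ 2 + x 1 ^ 2

/-- The cone `𝒞 = L_{ℚ≥}(S) ∩ ℕ²` of a subsemigroup `S ⊆ ℕ²`. -/
def coneN (S : Set (Fin 2 → ℕ)) : Set (Fin 2 → ℕ) := {x | toQ x ∈ coneQ (toQ '' S)}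

/-- The interior `int(X)` of `X` relative to the extremal rays through `v1, v2`. -/
def interiorOf (X : Set (Fin 2 → ℕ)) (v1 v2 : Fin 2 → ℕ) : Set (Fin 2 → ℕ) :=
  X \ (rayN v1 ∪ rayN v2)

/-- `S̄ = {a ∈ ℕ² : a + g ∈ S for every generator g ∈ G}`. -/
def sbar (S : Set (Fin 2 → ℕ)) (G : Finset (Fin 2 → ℕ)) : Set (Fin 2 → ℕ) :=
  {a | ∀ g ∈ G, a + g ∈ S}

/-- `n` is the nonzero element of minimal (Euclidean) norm of `T` on the ray `τ`. -/
def IsMinOnRay (T τ : Set (Fin 2 → ℕ)) (n : Fin 2 → ℕ) : Prop :=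
  n ∈ T ∩ τ ∧ n ≠ 0 ∧ ∀ m ∈ T ∩ τ, m ≠ 0 → normSq n ≤ normSq m

/-- The Cohen–Macaulay criterion for a simplicial semigroup `T ⊆ ℕ²` with cone `C`
and extremal rays `τ1, τ2`: for the minimal elements `n1, n2` of `T` on the two rays,
every `a ∈ C \ T` satisfies `a + n1 ∉ T` or `a + n2 ∉ T`. -/
def IsCMsg (T C τ1 τ2 : Set (Fin 2 → ℕ)) : Prop :=
  ∃ n1 n2 : Fin 2 → ℕ, IsMinOnRay T τ1 n1 ∧ IsMinOnRay T τ2 n2 ∧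
    ∀ a ∈ C \ T, a + n1 ∉ T ∨ a + n2 ∉ T

/-- `S` is Buchsbaum iff (Rosales) the semigroup `S̄` is Cohen–Macaulay. -/
def IsBuchsbaumSG (S : Set (Fin 2 → ℕ)) (G : Finset (Fin 2 → ℕ))
    (C τ1 τ2 : Set (Fin 2 → ℕ)) : Prop :=
  IsCMsg (sbar S G) C τ1 τ2

/-- A subsemigroup of `ℕ²` is generated by a single element. -/
def genByOne (T : Set (Fin 2 → ℕ)) : Prop :=
  ∃ n : Fin 2 → ℕ, T = {x | ∃ k : ℕ, x = k • n}

/-- The circle semigroup of the circle (disk) of center `(a,b)` and radius `r`. -/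
def circleSG (a b r : ℝ) : Set (Fin 2 → ℕ) :=
  {x | ∃ i : ℕ, ((x 0 : ℝ) - i * a) ^ 2 + ((x 1 : ℝ) - i * b) ^ 2 ≤ (i * r) ^ 2}

/-- The convex body semigroup `⋃ i, (i·F ∩ ℕ²)` of a convex body `F ⊆ ℚ²`. -/
def polySG (F : Set (Fin 2 → ℚ)) : Set (Fin 2 → ℕ) :=
  {x | ∃ i : ℕ, toQ x ∈ (i : ℚ) • F}

/-- `G` is a minimal generating set of the semigroup `S`. -/
def minimalGenSet (S : Set (Fin 2 → ℕ)) (G : Finset (Fin 2 → ℕ)) : Prop :=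
  (AddSubmonoid.closure (G : Set (Fin 2 → ℕ)) : Set (Fin 2 → ℕ)) = S ∧
  ∀ g ∈ G, g ∉ (AddSubmonoid.closure ((G.erase g : Finset (Fin 2 → ℕ)) :
    Set (Fin 2 → ℕ)) : Set (Fin 2 → ℕ))

/-- `S` is simplicial with extremal rays through `v1` and `v2`. -/
def Simplicial (S : Set (Fin 2 → ℕ)) (v1 v2 : Fin 2 → ℕ) : Prop :=
  v1 ≠ 0 ∧ v2 ≠ 0 ∧ rayN v1 ≠ rayN v2 ∧
  coneQ (toQ '' S) = coneQ {toQ v1, toQ v2}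

/-- The intersection `h·[P1,Pt] ∩ (h+1)·[P1,P2]` of consecutive dilated sides. -/
def crossSet (P1 Pt P2 : Fin 2 → ℚ) (h : ℕ) : Set (Fin 2 → ℚ) :=
  segment ℚ ((h : ℚ) • P1) ((h : ℚ) • Pt) ∩
    segment ℚ (((h : ℚ) + 1) • P1) (((h : ℚ) + 1) • P2)

/-- The region `ℬ = {D + λ·n : D ∈ [j·P1, V], λ ∈ ℚ_{≥0}} ∩ C`. -/
def stripB (P1 V : Fin 2 → ℚ) (j : ℕ) (n : Fin 2 → ℕ) (C : Set (Fin 2 → ℕ)) :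
    Set (Fin 2 → ℕ) :=
  {x | (∃ D ∈ segment ℚ ((j : ℚ) • P1) V, ∃ l : ℚ, 0 ≤ l ∧ toQ x = D + l • toQ n) ∧
    x ∈ C}

/-- A (affine) line in `ℚ²`. -/
def IsLine (ν : Set (Fin 2 → ℚ)) : Prop :=
  ∃ p d : Fin 2 → ℚ, d ≠ 0 ∧ ν = {y | ∃ s : ℚ, y = p + s • d}

/-- The corner region `Υ_i = ConvexHull({O, j·P1, V, ν ∩ τ}) ∩ ℕ²`. -/
def Ups (j : ℕ) (P1 V W : Fin 2 → ℚ) : Set (Fin 2 → ℕ) :=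
  {x | toQ x ∈ convexHull ℚ {0, (j : ℚ) • P1, V, W}}

/-- The translated-cone region `Υ = (Q + L_{ℚ≥}(F)) ∩ ℕ²`. -/
def UpsMain (Qpt : Fin 2 → ℚ) (F : Set (Fin 2 → ℚ)) : Set (Fin 2 → ℕ) :=
  {x | ∃ y ∈ coneQ F, toQ x = Qpt + y}

/-!
Let `P₁, Pₜ, P₂` be the vertex of `F` on `τ₁` and its two neighbours, and let `φ`, `ψ` be
supporting functionals of `F` along the sides `[P₁, Pₜ]` and `[P₁, P₂]`. Writing
`V₁ = j P₁ + c (Pₜ - P₁) = (j + 1) P₁ + d (P₂ - P₁)` gives `c (Pₜ - P₁) = P₁ + d (P₂ - P₁)`,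
hence `φ P₁ < 0` and `ψ P₁ = c (ψ Pₜ - ψ P₁)`. A point `z = s P₁ + β (Pₜ - P₁)` of `ℬ₁`
(`s ≥ j`, `0 ≤ β ≤ c`) with `z + k P₁ ∈ m F` thus satisfies `M := m - s - k ≥ 0` (by `φ`) and
`M c ≤ β` (by `ψ`), and the same relation writes `z` as a nonnegative combination of `P₁, Pₜ, P₂`
of total weight `m - k`, so `z ∈ (m - k) F`. As `n₁ = k P₁`, this gives `x + n₁ ∈ 𝔓 → x ∈ 𝔓`
on `ℬ₁`. Finally `n₁` is a minimal generator of `𝔓`: in a simplicial cone a decomposition of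
`n₁` has its summands on `τ₁`, and a nonzero one would be shorter than `n₁`.
-/
section Convexity

variable {𝕜 E : Type*} [Field 𝕜] [LinearOrder 𝕜] [IsStrictOrderedRing 𝕜]
  [AddCommGroup E] [Module 𝕜 E]

lemma IsExtreme.mem_segment_of_eq_add_smul {F : Set E} {A B X : E} {s : 𝕜}
    (h : IsExtreme 𝕜 F (segment 𝕜 A B)) (hX : X ∈ F) (hXs : X = A + s • (B - A)) :
    X ∈ segment 𝕜 A B := by
  have hA : A ∈ F := h.subset (left_mem_segment 𝕜 A B)
  have hB : B ∈ F := h.subset (right_mem_segment 𝕜 A B)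
  rcases lt_or_ge 1 s with hs1 | hs1
  · refine h.right_mem_of_mem_openSegment hA hX (right_mem_segment 𝕜 A B) ?_
    rw [openSegment_eq_image']
    refine ⟨s⁻¹, ⟨by positivity, inv_lt_one_of_one_lt₀ hs1⟩, ?_⟩
    simp only [hXs, add_sub_cancel_left, smul_smul, inv_mul_cancel₀ (by positivity : s ≠ 0),
      one_smul, add_sub_cancel]
  rcases lt_or_ge s 0 with hs0 | hs0
  · refine h.left_mem_of_mem_openSegment hX hB (left_mem_segment 𝕜 A B) ?_
    rw [openSegment_eq_image']
    have h1s : (1 - s) ≠ 0 := by linarith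
    refine ⟨-s / (1 - s), ⟨div_pos (by linarith) (by linarith), ?_⟩, ?_⟩
    · rw [div_lt_one (by linarith)]; linarith
    · rw [hXs]
      match_scalars <;> field_simp <;> ring_nf
  · rw [segment_eq_image']
    exact ⟨s, ⟨hs0, hs1⟩, hXs.symm⟩

lemma le_apply_of_mem_smul {F : Set E} {φ : Module.Dual 𝕜 E} {a m : 𝕜} {y : E}
    (hφ : ∀ f ∈ F, a ≤ φ f) (hm : 0 ≤ m) (hy : y ∈ m • F) : m * a ≤ φ y := by
  obtain ⟨f, hf, rfl⟩ := hy
  rw [map_smul, smul_eq_mul]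
  exact mul_le_mul_of_nonneg_left (hφ f hf) hm

lemma IsExtreme.apply_le_of_ker {F : Set E} {A B C : E} {φ : Module.Dual 𝕜 E}
    (hF : Convex 𝕜 F) (hAB : IsExtreme 𝕜 F (segment 𝕜 A B)) (hφB : φ B = φ A)
    (hker : ∀ y, φ y = 0 → ∃ s : 𝕜, y = s • (B - A)) (hC : C ∈ F) (hφC : φ A < φ C) :
    ∀ f ∈ F, φ A ≤ φ f := by
  intro f hf
  by_contra! hfA
  -- the segment from `C` to `f` crosses the line `AB` at `X`
  set t := (φ C - φ A) / (φ C - φ f)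
  have ht : t ∈ Ioo (0 : 𝕜) 1 :=
    ⟨div_pos (by linarith) (by linarith), (div_lt_one (by linarith)).2 (by linarith)⟩
  set X := C + t • (f - C)
  have hXopen : X ∈ openSegment 𝕜 C f := by
    rw [openSegment_eq_image']; exact ⟨t, ht, rfl⟩
  have hφX : φ (X - A) = 0 := by
    have : φ C - φ f ≠ 0 := (sub_pos.2 (hfA.trans hφC)).ne'
    simp only [X, t, map_sub, map_add, map_smul, smul_eq_mul]
    field_simp
    ring
  obtain ⟨s, hs⟩ := hker _ hφX
  have hXseg : X ∈ segment 𝕜 A B :=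
    hAB.mem_segment_of_eq_add_smul (hF.openSegment_subset hC hf hXopen)
      (eq_add_of_sub_eq' hs)
  have hCseg := hAB.left_mem_of_mem_openSegment hC hf hXseg hXopen
  rw [segment_eq_image'] at hCseg
  obtain ⟨θ, -, rfl⟩ := hCseg
  simp [map_sub, hφB] at hφC

lemma exists_smul_eq_of_mem_segment_smul {A B X : E} {h : 𝕜}
    (hX : X ∈ segment 𝕜 (h • A) (h • B)) :
    ∃ u ∈ Icc (0 : 𝕜) 1, X = h • (A + u • (B - A)) := by
  rw [segment_eq_image'] at hX
  obtain ⟨u, hu, rfl⟩ := hX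
  exact ⟨u, hu, by module⟩

lemma add_add_smul_mem_smul {F : Set E} (hF : Convex 𝕜 F) {p q r : E} (hp : p ∈ F) (hq : q ∈ F)
    (hr : r ∈ F) {a b c : 𝕜} (ha : 0 ≤ a) (hb : 0 ≤ b) (hc : 0 ≤ c) :
    a • p + b • q + c • r ∈ (a + b + c) • F := by
  rw [hF.add_smul (add_nonneg ha hb) hc, hF.add_smul ha hb]
  exact add_mem_add (add_mem_add (smul_mem_smul_set hp) (smul_mem_smul_set hq))
    (smul_mem_smul_set hr)

structure SupportsSide (φ : Module.Dual 𝕜 E) (F : Set E) (A B C : E) : Prop where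
  apply_right : φ B = φ A
  apply_lt : φ A < φ C
  apply_le : ∀ f ∈ F, φ A ≤ φ f

end Convexity

section Corner

variable {𝕜 E : Type*} [Field 𝕜] [LinearOrder 𝕜] [IsStrictOrderedRing 𝕜]
  [AddCommGroup E] [Module 𝕜 E] {F : Set E} {φ ψ : Module.Dual 𝕜 E} {P1 Pt P2 : E}
  {c d j s β m k : 𝕜}

lemma le_and_mul_le_of_mem_smul (hφ : SupportsSide φ F P1 Pt P2) (hψ : SupportsSide ψ F P1 P2 Pt)
    (hd : 0 < d) (hrel : c • (Pt - P1) = P1 + d • (P2 - P1)) (hm : 0 ≤ m)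
    (hz : s • P1 + β • (Pt - P1) ∈ m • F) :
    s ≤ m ∧ (m - s) * c ≤ β := by
  have hφrel := congrArg φ hrel
  have hψrel := congrArg ψ hrel
  have hφz := le_apply_of_mem_smul hφ.apply_le hm hz
  have hψz := le_apply_of_mem_smul hψ.apply_le hm hz
  simp only [map_add, map_smul, map_sub, smul_eq_mul, hφ.apply_right, hψ.apply_right,
    sub_self, mul_zero, add_zero] at hφrel hψrel hφz hψz
  have hφP1 : φ P1 < 0 := by nlinarith [hφ.apply_lt]
  have hψt : 0 < ψ Pt - ψ P1 := sub_pos.2 hψ.apply_lt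
  refine ⟨by nlinarith, le_of_mul_le_mul_right ?_ hψt⟩
  nlinarith

lemma mem_smul_of_mul_le (hF : Convex 𝕜 F) (hP1 : P1 ∈ F) (hPt : Pt ∈ F) (hP2 : P2 ∈ F)
    (hc : 0 < c) (hcj : c ≤ j) (hd : 0 ≤ d) (hdj : d ≤ j + 1)
    (hrel : c • (Pt - P1) = P1 + d • (P2 - P1)) (hs : j ≤ s) (hβc : β ≤ c)
    {M : 𝕜} (hM : 0 ≤ M) (hMc : M * c ≤ β) :
    s • P1 + β • (Pt - P1) ∈ (s + M) • F := by
  have hM1 : M ≤ 1 := le_of_mul_le_mul_right (by linarith) hc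
  have hδ : 0 ≤ s + M - β + M * c - M * d := by
    nlinarith [mul_nonneg (sub_nonneg.2 hM1) (sub_nonneg.2 hcj), mul_nonneg hM (sub_nonneg.2 hdj)]
  have hε : 0 ≤ β - M * c := sub_nonneg.2 hMc
  have hζ : 0 ≤ M * d := mul_nonneg hM hd
  have hdecomp : s • P1 + β • (Pt - P1) =
      (s + M - β + M * c - M * d) • P1 + (β - M * c) • Pt + (M * d) • P2 := by
    linear_combination (norm := module) M • hrel
  rw [hdecomp]
  convert add_add_smul_mem_smul hF hP1 hPt hP2 hδ hε hζ using 2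
  ring

lemma mem_sub_smul_of_add_smul_mem_smul (hF : Convex 𝕜 F) (hP1 : P1 ∈ F) (hPt : Pt ∈ F)
    (hP2 : P2 ∈ F) (hφ : SupportsSide φ F P1 Pt P2) (hψ : SupportsSide ψ F P1 P2 Pt)
    (hc : 0 < c) (hcj : c ≤ j) (hd : 0 < d) (hdj : d ≤ j + 1)
    (hrel : c • (Pt - P1) = P1 + d • (P2 - P1)) (hs : j ≤ s) (hβc : β ≤ c) (hm : 0 ≤ m)
    (hz : (s + k) • P1 + β • (Pt - P1) ∈ m • F) :
    s + k ≤ m ∧ s • P1 + β • (Pt - P1) ∈ (m - k) • F := by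
  obtain ⟨hskm, hMc⟩ := le_and_mul_le_of_mem_smul hφ hψ hd hrel hm hz
  refine ⟨hskm, ?_⟩
  have := mem_smul_of_mul_le hF hP1 hPt hP2 hc hcj hd.le hdj hrel hs hβc (sub_nonneg.2 hskm) hMc
  rwa [show s + (m - (s + k)) = m - k by ring] at this

end Corner

section Plane

variable {𝕜 : Type*} [Field 𝕜]

def wedge (d : Fin 2 → 𝕜) : Module.Dual 𝕜 (Fin 2 → 𝕜) :=
  d 0 • LinearMap.proj 1 - d 1 • LinearMap.proj 0

@[simp]
lemma wedge_apply (d y : Fin 2 → 𝕜) : wedge d y = d 0 * y 1 - d 1 * y 0 := by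
  simp [wedge]

lemma wedge_self (d : Fin 2 → 𝕜) : wedge d d = 0 := by
  rw [wedge_apply, mul_comm, sub_self]

lemma exists_eq_smul_of_wedge_eq_zero {d y : Fin 2 → 𝕜} (hd : d ≠ 0) (h : wedge d y = 0) :
    ∃ s : 𝕜, y = s • d := by
  rw [wedge_apply, sub_eq_zero] at h
  by_cases h0 : d 0 = 0
  · have h1 : d 1 ≠ 0 := fun h1 => hd (funext fun i => by fin_cases i <;> simp [h0, h1])
    refine ⟨y 1 / d 1, funext fun i => ?_⟩
    fin_cases i
    · simp only [h0, zero_mul, zero_eq_mul, h1, false_or] at h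
      simp [h, h0]
    · simp [h1]
  · refine ⟨y 0 / d 0, funext fun i => ?_⟩
    fin_cases i
    · simp [h0]
    · simp only [Fin.mk_one, Fin.isValue, Pi.smul_apply, smul_eq_mul]
      field_simp
      linear_combination h

variable [LinearOrder 𝕜] [IsStrictOrderedRing 𝕜]

lemma exists_supportsSide {F : Set (Fin 2 → 𝕜)} {A B C : Fin 2 → 𝕜} (hF : Convex 𝕜 F)
    (hAB : IsExtreme 𝕜 F (segment 𝕜 A B)) (hne : A ≠ B) (hC : C ∈ F)
    (hC' : ¬∃ c : 𝕜, C - A = c • (B - A)) :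
    ∃ φ : Module.Dual 𝕜 (Fin 2 → 𝕜), SupportsSide φ F A B C := by
  have hd : B - A ≠ 0 := sub_ne_zero.2 hne.symm
  set e := wedge (B - A) (C - A)
  have he : e ≠ 0 := fun h => hC' (exists_eq_smul_of_wedge_eq_zero hd h)
  -- rescaling by `e` makes the functional positive at `C`
  have hφB : (e • wedge (B - A)) B = (e • wedge (B - A)) A := by
    rw [← sub_eq_zero, ← map_sub, LinearMap.smul_apply, wedge_self, smul_zero]
  have hφC : (e • wedge (B - A)) A < (e • wedge (B - A)) C := by
    rw [← sub_pos, ← map_sub, LinearMap.smul_apply, smul_eq_mul]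
    exact mul_self_pos.2 he
  refine ⟨e • wedge (B - A), hφB, hφC, hAB.apply_le_of_ker hF hφB (fun y hy => ?_) hC hφC⟩
  rw [LinearMap.smul_apply, smul_eq_mul, mul_eq_zero] at hy
  exact exists_eq_smul_of_wedge_eq_zero hd (hy.resolve_left he)

end Plane

section Polygon

lemma toQ_add (x y : Fin 2 → ℕ) : toQ (x + y) = toQ x + toQ y := by
  funext i; simp [toQ]

lemma toQ_eq_zero {x : Fin 2 → ℕ} : toQ x = 0 ↔ x = 0 := by
  simp [funext_iff, toQ]

variable {F : Set (Fin 2 → ℚ)} {v P1 Pt P2 V : Fin 2 → ℚ}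

lemma smul_mem_rayQ {y : Fin 2 → ℚ} (hy : y ∈ rayQ v) {c : ℚ} (hc : 0 ≤ c) :
    c • y ∈ rayQ v := by
  obtain ⟨q, hq, rfl⟩ := hy
  exact ⟨c * q, mul_nonneg hc hq, smul_smul c q v⟩

lemma eq_of_smul_mem_smul (hray : F ∩ rayQ v = {P1}) (hP10 : P1 ≠ 0) {c h : ℚ} (hc : 0 ≤ c)
    (hh : 0 < h) (hmem : c • P1 ∈ h • F) : c = h := by
  obtain ⟨f, hf, hfc⟩ := hmem
  have hP1v : P1 ∈ rayQ v := (hray.symm ▸ mem_singleton P1 : P1 ∈ F ∩ rayQ v).2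
  have hf' : f = (c / h) • P1 := by
    rw [div_eq_inv_mul, mul_smul, ← hfc, smul_smul, inv_mul_cancel₀ hh.ne', one_smul]
  have hfP1 : f ∈ F ∩ rayQ v := ⟨hf, hf' ▸ smul_mem_rayQ hP1v (div_nonneg hc hh.le)⟩
  rw [hray, mem_singleton_iff] at hfP1
  rw [hfP1] at hfc
  exact (smul_left_injective ℚ hP10 hfc).symm

lemma exists_nat_smul_eq_of_mem_polySG (hray : F ∩ rayQ v = {P1}) {n : Fin 2 → ℕ}
    (hn : n ∈ polySG F) (hnv : toQ n ∈ rayQ v) (hn0 : n ≠ 0) :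
    ∃ k : ℕ, toQ n = (k : ℚ) • P1 := by
  obtain ⟨i, f, hf, hfn : (i : ℚ) • f = toQ n⟩ := hn
  have hi : (i : ℚ) ≠ 0 := by
    rintro hi
    rw [hi, zero_smul, eq_comm, toQ_eq_zero] at hfn
    exact hn0 hfn
  have hf' : f = (i : ℚ)⁻¹ • toQ n := by rw [← hfn, smul_smul, inv_mul_cancel₀ hi, one_smul]
  have hfP1 : f ∈ F ∩ rayQ v := ⟨hf, hf' ▸ smul_mem_rayQ hnv (inv_nonneg.2 (Nat.cast_nonneg i))⟩
  rw [hray, mem_singleton_iff] at hfP1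
  exact ⟨i, by rw [← hfn, hfP1]⟩

lemma exists_params_of_mem_crossSet (hray : F ∩ rayQ v = {P1}) (hP10 : P1 ≠ 0)
    (ht : segment ℚ P1 Pt ⊆ F) (h2 : segment ℚ P1 P2 ⊆ F) {j : ℕ} (hj : 0 < j)
    (hV : V ∈ crossSet P1 Pt P2 j) :
    ∃ c d : ℚ, 0 < c ∧ c ≤ j ∧ 0 < d ∧ d ≤ j + 1 ∧ P2 ≠ P1 ∧
      V = (j : ℚ) • P1 + c • (Pt - P1) ∧ V = ((j : ℚ) + 1) • P1 + d • (P2 - P1) := by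
  have hjQ : (0 : ℚ) < j := Nat.cast_pos.2 hj
  obtain ⟨⟨u, ⟨hu0, hu1⟩, hVu⟩, ⟨w, ⟨hw0, hw1⟩, hVw⟩⟩ :=
    And.intro (exists_smul_eq_of_mem_segment_smul hV.1) (exists_smul_eq_of_mem_segment_smul hV.2)
  have hVj : V ∈ (j : ℚ) • F :=
    ⟨_, ht (by rw [segment_eq_image']; exact ⟨u, ⟨hu0, hu1⟩, rfl⟩), hVu.symm⟩
  have hVj1 : V ∈ ((j : ℚ) + 1) • F :=
    ⟨_, h2 (by rw [segment_eq_image']; exact ⟨w, ⟨hw0, hw1⟩, rfl⟩), hVw.symm⟩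
  -- `V` on the ray of `P1` would put the multiple `j P1` in `(j+1) F` or `(j+1) P1` in `j F`
  have hu : 0 < u := by
    refine hu0.lt_of_ne' fun hu => ?_
    rw [hu, zero_smul, add_zero] at hVu
    have := eq_of_smul_mem_smul hray hP10 hjQ.le (by positivity) (hVu ▸ hVj1)
    linarith
  have hw : 0 < w ∧ P2 ≠ P1 := by
    by_contra! hw
    have hVj1' : V = ((j : ℚ) + 1) • P1 := by
      rcases le_or_gt w 0 with hw0' | hw0'
      · rw [hVw, le_antisymm hw0' hw0, zero_smul, add_zero]
      · rw [hVw, hw hw0', sub_self, smul_zero, add_zero]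
    have := eq_of_smul_mem_smul hray hP10 (by positivity) hjQ (hVj1' ▸ hVj)
    linarith
  refine ⟨j * u, (j + 1) * w, by positivity, by nlinarith, mul_pos (by positivity) hw.1,
    by nlinarith, hw.2, by rw [hVu]; module, by rw [hVw]; module⟩

lemma add_notMem_polySG_of_mem_stripB (hF : Convex ℚ F) (hray : F ∩ rayQ v = {P1})
    (hedge1 : IsExtreme ℚ F (segment ℚ P1 Pt)) (hedge2 : IsExtreme ℚ F (segment ℚ P1 P2))
    (hnp : ¬∃ c : ℚ, Pt - P1 = c • (P2 - P1)) {j : ℕ} (hj : 0 < j)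
    (hV : V ∈ crossSet P1 Pt P2 j) {n : Fin 2 → ℕ} {k : ℕ} (hn : toQ n = (k : ℚ) • P1)
    (hn0 : n ≠ 0) {C : Set (Fin 2 → ℕ)} {x : Fin 2 → ℕ} (hx : x ∈ stripB P1 V j n C)
    (hxF : x ∉ polySG F) : x + n ∉ polySG F := by
  have hP10 : P1 ≠ 0 := fun h => hn0 (toQ_eq_zero.1 (by rw [hn, h, smul_zero]))
  obtain ⟨c, d, hc, hcj, hd, hdj, hP2, hVc, hVd⟩ :=
    exists_params_of_mem_crossSet hray hP10 hedge1.subset hedge2.subset hj hV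
  have hrel : c • (Pt - P1) = P1 + d • (P2 - P1) := by
    linear_combination (norm := module) hVd - hVc
  have hPt : Pt ≠ P1 := fun h => hnp ⟨0, by rw [h, sub_self, zero_smul]⟩
  have hnp' : ¬∃ c : ℚ, P2 - P1 = c • (Pt - P1) := by
    rintro ⟨e, he⟩
    have he0 : e ≠ 0 := by rintro rfl; exact hP2 (sub_eq_zero.1 (by rw [he, zero_smul]))
    exact hnp ⟨e⁻¹, by rw [he, smul_smul, inv_mul_cancel₀ he0, one_smul]⟩
  have hP1F := hedge1.subset (left_mem_segment ℚ P1 Pt)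
  have hPtF := hedge1.subset (right_mem_segment ℚ P1 Pt)
  have hP2F := hedge2.subset (right_mem_segment ℚ P1 P2)
  obtain ⟨φ, hφ⟩ := exists_supportsSide hF hedge1 hPt.symm hP2F hnp'
  obtain ⟨ψ, hψ⟩ := exists_supportsSide hF hedge2 hP2.symm hPtF hnp
  obtain ⟨⟨D, hD, l, hl, hxD⟩, -⟩ := hx
  rw [segment_eq_image'] at hD
  obtain ⟨a, ⟨ha0, ha1⟩, rfl⟩ := hD
  have hx' : toQ x = (j + l * k) • P1 + (a * c) • (Pt - P1) := by
    rw [hxD, hn, hVc]; module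
  have hxn : toQ (x + n) = ((j + l * k) + k) • P1 + (a * c) • (Pt - P1) := by
    rw [toQ_add, hx', hn]; module
  rintro ⟨m, hm⟩
  rw [hxn] at hm
  obtain ⟨hkm, hxm⟩ := mem_sub_smul_of_add_smul_mem_smul hF hP1F hPtF hP2F hφ hψ hc hcj hd hdj
    hrel (le_add_of_nonneg_right (by positivity)) (by nlinarith) (Nat.cast_nonneg m) hm
  have hkm' : k ≤ m := by exact_mod_cast (by nlinarith [hkm] : (k : ℚ) ≤ m)
  exact hxF ⟨m - k, by rwa [Nat.cast_sub hkm', hx']⟩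

end Polygon

section Generators

variable {S : Set (Fin 2 → ℕ)} {G : Finset (Fin 2 → ℕ)} {v1 v2 : Fin 2 → ℕ}

lemma mem_coneQ_pair {X Y z : Fin 2 → ℚ} (h : z ∈ coneQ {X, Y}) :
    ∃ a b : ℚ, 0 ≤ a ∧ 0 ≤ b ∧ z = a • X + b • Y := by
  obtain ⟨n, q, f, hq, hf, rfl⟩ := h
  induction n with
  | zero => exact ⟨0, 0, le_rfl, le_rfl, by simp⟩
  | succ n ih =>
    obtain ⟨a, b, ha, hb, hab⟩ := ih (fun i => q i.succ) (fun i => f i.succ)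
      (fun i => hq _) (fun i => hf _)
    rw [Fin.sum_univ_succ, hab]
    rcases hf 0 with h0 | h0
    · exact ⟨q 0 + a, b, add_nonneg (hq 0) ha, hb, by rw [h0]; module⟩
    · rw [mem_singleton_iff] at h0
      exact ⟨a, q 0 + b, ha, add_nonneg (hq 0) hb, by rw [h0]; module⟩

lemma Simplicial.toQ_ne_smul (hS : Simplicial S v1 v2) (c : ℚ) : toQ v2 ≠ c • toQ v1 := by
  intro h
  rcases le_or_gt c 0 with hc | hc
  · refine hS.2.1 (toQ_eq_zero.1 (funext fun i => ?_))
    have hi := congrFun h i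
    simp only [toQ, Pi.smul_apply, smul_eq_mul, Pi.zero_apply] at hi ⊢
    have : c * (v1 i : ℚ) ≤ 0 := mul_nonpos_of_nonpos_of_nonneg hc (Nat.cast_nonneg _)
    linarith [(Nat.cast_nonneg (v2 i) : (0 : ℚ) ≤ v2 i)]
  · refine hS.2.2.1 (Set.ext fun y => ⟨fun ⟨q, hq, hy⟩ => ⟨q / c, by positivity, ?_⟩,
      fun ⟨q, hq, hy⟩ => ⟨q * c, by positivity, ?_⟩⟩)
    · rw [hy, h, smul_smul, div_mul_cancel₀ _ hc.ne']
    · rw [hy, h, smul_smul]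

lemma Simplicial.mem_rayN_of_add_mem_rayN (hS : Simplicial S v1 v2) {g r : Fin 2 → ℕ}
    (hg : g ∈ S) (hr : r ∈ S) (h : g + r ∈ rayN v1) : g ∈ rayN v1 := by
  have hcone (y : Fin 2 → ℕ) (hy : y ∈ S) :
      ∃ a b : ℚ, 0 ≤ a ∧ 0 ≤ b ∧ toQ y = a • toQ v1 + b • toQ v2 :=
    mem_coneQ_pair (hS.2.2.2 ▸ ⟨1, fun _ => 1, fun _ => toQ y, fun _ => zero_le_one,
      fun _ => ⟨y, hy, rfl⟩, by simp⟩)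
  obtain ⟨ag, bg, hag, hbg, hgv⟩ := hcone g hg
  obtain ⟨ar, br, har, hbr, hrv⟩ := hcone r hr
  obtain ⟨q, -, hq⟩ := h
  rw [toQ_add, hgv, hrv] at hq
  have hb : bg + br = 0 := by
    by_contra hb
    have h2 : (bg + br) • toQ v2 = (q - ag - ar) • toQ v1 := by
      linear_combination (norm := module) hq
    apply hS.toQ_ne_smul ((q - ag - ar) / (bg + br))
    rw [div_eq_inv_mul, mul_smul, ← h2, smul_smul, inv_mul_cancel₀ hb, one_smul]
  exact ⟨ag, hag, by rw [hgv, (by linarith : bg = 0), zero_smul, add_zero]⟩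

lemma normSq_add_le (g r : Fin 2 → ℕ) : normSq g + normSq r ≤ normSq (g + r) := by
  simp only [normSq, Pi.add_apply, add_sq]
  omega

lemma normSq_pos {r : Fin 2 → ℕ} (hr : r ≠ 0) : 0 < normSq r := by
  rw [Nat.pos_iff_ne_zero]
  intro h
  simp only [normSq, Nat.add_eq_zero_iff, pow_eq_zero_iff two_ne_zero] at h
  exact hr (funext fun i => by fin_cases i <;> simp [h.1, h.2])

lemma IsMinOnRay.mem_of_minimalGenSet {n : Fin 2 → ℕ} (hn : IsMinOnRay S (rayN v1) n)
    (hG : minimalGenSet S G) (hS : Simplicial S v1 v2) : n ∈ G := by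
  obtain ⟨⟨hnS, hnv⟩, hn0, hmin⟩ := hn
  have hGS {y : Fin 2 → ℕ} (hy : y ∈ AddSubmonoid.closure (G : Set (Fin 2 → ℕ))) : y ∈ S :=
    hG.1 ▸ hy
  obtain ⟨l, hlG, rfl⟩ := AddSubmonoid.exists_list_of_mem_closure (s := (G : Set (Fin 2 → ℕ)))
    (by rw [← SetLike.mem_coe, hG.1]; exact hnS)
  cases l with
  | nil => exact absurd List.sum_nil hn0
  | cons g r =>
    rw [List.sum_cons] at hnS hnv hmin ⊢
    have hgG : g ∈ G := hlG g List.mem_cons_self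
    by_cases hr0 : r.sum = 0
    · rwa [hr0, add_zero]
    have hgS : g ∈ S := hGS (AddSubmonoid.subset_closure hgG)
    have hrS : r.sum ∈ S := hGS (list_sum_mem fun y hy =>
      AddSubmonoid.subset_closure (hlG y (List.mem_cons_of_mem g hy)))
    have hg0 : g ≠ 0 := fun h => hG.2 0 (h ▸ hgG) (zero_mem _)
    have := hmin g ⟨hgS, hS.mem_rayN_of_add_mem_rayN hgS hrS hnv⟩ hg0
    linarith [normSq_add_le g r.sum, normSq_pos hr0]

lemma inter_eq_sbar_inter {B : Set (Fin 2 → ℕ)} {n : Fin 2 → ℕ}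
    (hG : (AddSubmonoid.closure (G : Set (Fin 2 → ℕ)) : Set (Fin 2 → ℕ)) = S) (hn : n ∈ G)
    (hB : ∀ x ∈ B, x ∉ S → x + n ∉ S) : S ∩ B = sbar S G ∩ B := by
  ext x
  refine ⟨fun ⟨hxS, hxB⟩ => ⟨fun g hg => ?_, hxB⟩, fun ⟨hx, hxB⟩ => ⟨?_, hxB⟩⟩
  · rw [← hG] at hxS ⊢
    exact add_mem hxS (AddSubmonoid.subset_closure hg)
  · by_contra hxS
    exact hB x hxB hxS (hx n hn)

end Generators

theorem stmt14_general (t : ℕ) (P : Fin t → (Fin 2 → ℚ))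
    (i1 it i2 : Fin t)
    (S : Set (Fin 2 → ℕ)) (hS : S = polySG (convexHull ℚ (Set.range P)))
    (G : Finset (Fin 2 → ℕ)) (hG : minimalGenSet S G)
    (v1 v2 : Fin 2 → ℕ) (hsimp : Simplicial S v1 v2)
    (hP1 : convexHull ℚ (Set.range P) ∩ rayQ (toQ v1) = {P i1})
    (hedge1 : IsExtreme ℚ (convexHull ℚ (Set.range P)) (segment ℚ (P i1) (P it)))
    (hedge2 : IsExtreme ℚ (convexHull ℚ (Set.range P)) (segment ℚ (P i1) (P i2)))
    (hnp : ¬ ∃ c : ℚ, P it - P i1 = c • (P i2 - P i1))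
    (j : ℕ) (hj0 : 0 < j)
    (V1 : Fin 2 → ℚ) (hV1 : crossSet (P i1) (P it) (P i2) j = {V1})
    (n1 : Fin 2 → ℕ) (hn1 : IsMinOnRay S (rayN v1) n1) :
    (∀ x ∈ stripB (P i1) V1 j n1 (coneN S), x ∉ S → x + n1 ∉ S) ∧
      S ∩ stripB (P i1) V1 j n1 (coneN S) =
        sbar S G ∩ stripB (P i1) V1 j n1 (coneN S) := by
  have hstrip : ∀ x ∈ stripB (P i1) V1 j n1 (coneN S), x ∉ S → x + n1 ∉ S := by
    obtain ⟨⟨hn1S, hn1v⟩, hn10, -⟩ := hn1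
    subst hS
    obtain ⟨k, hk⟩ := exists_nat_smul_eq_of_mem_polySG hP1 hn1S hn1v hn10
    exact fun x hx => add_notMem_polySG_of_mem_stripB (convex_convexHull ℚ _) hP1 hedge1 hedge2
      hnp hj0 (hV1 ▸ mem_singleton V1) hk hn10 hx
  exact ⟨hstrip, inter_eq_sbar_inter hG.1 (hn1.mem_of_minimalGenSet hG hsimp) hstrip⟩

/-- Let `F` meet `τ_1` in the single vertex `P_1` with adjacent
vertices `P_t, P_2`, `j` least positive with `j[P_1,P_t] ∩ (j+1)[P_1,P_2] = {V_1}`,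
and `ℬ_1 = {D + λ n_1 : D ∈ [jP_1,V_1], λ ∈ ℚ_{≥0}} ∩ 𝒞`. Then every
`P ∈ ℬ_1 \ 𝔓` has `P + n_1 ∉ 𝔓`, and `𝔓 ∩ ℬ_1 = 𝔓̄ ∩ ℬ_1`. -/
theorem stmt14 (t : ℕ) (P : Fin t → (Fin 2 → ℚ)) (hpos : ∀ j i, 0 ≤ P j i)
    (i1 it i2 : Fin t) (hne : i1 ≠ it ∧ i1 ≠ i2 ∧ it ≠ i2)
    (S : Set (Fin 2 → ℕ)) (hS : S = polySG (convexHull ℚ (Set.range P)))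
    (G : Finset (Fin 2 → ℕ)) (hG : minimalGenSet S G)
    (v1 v2 : Fin 2 → ℕ) (hsimp : Simplicial S v1 v2)
    (hP1 : convexHull ℚ (Set.range P) ∩ rayQ (toQ v1) = {P i1})
    (hedge1 : IsExtreme ℚ (convexHull ℚ (Set.range P)) (segment ℚ (P i1) (P it)))
    (hedge2 : IsExtreme ℚ (convexHull ℚ (Set.range P)) (segment ℚ (P i1) (P i2)))
    (hnp : ¬ ∃ c : ℚ, P it - P i1 = c • (P i2 - P i1))
    (j : ℕ) (hj0 : 0 < j) (hjex : (crossSet (P i1) (P it) (P i2) j).Nonempty)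
    (hjle : ∀ j' : ℕ, 0 < j' → (crossSet (P i1) (P it) (P i2) j').Nonempty → j ≤ j')
    (V1 : Fin 2 → ℚ) (hV1 : crossSet (P i1) (P it) (P i2) j = {V1})
    (n1 : Fin 2 → ℕ) (hn1 : IsMinOnRay S (rayN v1) n1) :
    (∀ x ∈ stripB (P i1) V1 j n1 (coneN S), x ∉ S → x + n1 ∉ S) ∧
      S ∩ stripB (P i1) V1 j n1 (coneN S) =
        sbar S G ∩ stripB (P i1) V1 j n1 (coneN S) :=
  stmt14_general t P i1 it i2 S hS G hG v1 v2 hsimp hP1 hedge1 hedge2 hnp j hj0 V1 hV1 n1 hn1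
end

section
/- Let 𝔓 be a simplicial affine convex polygonal semigroup with cone 𝒞, with the sets ℬ_1, ℬ_2, Υ_1, Υ_2, Υ defined from the boundary structure of the dilations of F as in the boundary decomposition construction. Then 𝒞 = ℬ_1 ∪ ℬ_2 ∪ Υ_1 ∪ Υ_2 ∪ Υ. -/
open Set
open scoped Pointwise

/-!
In the coordinates `α, β` dual to the basis `v₁, v₂`, the cone `𝒞` is the quadrant
`{α ≥ 0, β ≥ 0}`, the vertex `P₁` lies on the axis `{β = 0}` and `P_d` on `{α = 0}`. Crossing
points of consecutive dilations differ by `P₁` (`V + P₁` is the crossing point of the next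
dilation), so `ν₁` is the horizontal line `{β = β V₁}`; symmetrically `ν₂ = {α = α V₂}`, and
`Q = (α V₂, β V₁)`. A point of `𝒞` below `ν₁` is compared with the point `D` of `[j₁ P₁, V₁]`
at its height: to the right of `D` it lies in `ℬ₁`, to the left it lies between `[0, W₁]` and
`D`, hence in `Υ₁`. Symmetrically for points left of `ν₂`, and a point beyond both lines lies in
`Q + 𝒞 = Q + L(F)`.
-/

section Quadrant

variable {𝕜 E : Type*} [Field 𝕜] [LinearOrder 𝕜] [AddCommGroup E] [Module 𝕜 E]
  {α β : E →ₗ[𝕜] 𝕜}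

def quadrant (α β : E →ₗ[𝕜] 𝕜) : Set E := {z | 0 ≤ α z ∧ 0 ≤ β z}

/-- The configuration at the extremal ray `{β = 0}`: the vertex `P` and the generator `N` lie on
that ray, `V` is the first crossing point, and `ν` is the line `{β = β V}`, which meets the other
extremal ray `{α = 0}` in `W`. -/
structure CornerData (α β : E →ₗ[𝕜] 𝕜) (P V N W : E) (ν : Set E) : Prop where
  vertex_pos : 0 < α P
  vertex_axis : β P = 0
  cross_mem : V ∈ quadrant α β
  gen_pos : 0 < α N
  gen_axis : β N = 0
  end_axis : α W = 0
  end_mem : W ∈ ν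
  level : ∀ y ∈ ν, β y = β V

theorem CornerData.end_mem_quadrant {P V N W : E} {ν : Set E}
    (hc : CornerData α β P V N W ν) : W ∈ quadrant α β :=
  ⟨hc.end_axis.ge, hc.level W hc.end_mem ▸ hc.cross_mem.2⟩

theorem CornerData.mem_quadrant_of_mem_inter {P₁ V₁ N₁ W₁ P₂ V₂ N₂ W₂ Q : E}
    {ν₁ ν₂ : Set E} (h₁ : CornerData α β P₁ V₁ N₁ W₁ ν₁) (h₂ : CornerData β α P₂ V₂ N₂ W₂ ν₂)
    (hQ : Q ∈ ν₁ ∩ ν₂) : Q ∈ quadrant α β :=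
  ⟨h₂.level Q hQ.2 ▸ h₂.cross_mem.2, h₁.level Q hQ.1 ▸ h₁.cross_mem.2⟩

variable [IsStrictOrderedRing 𝕜]

theorem add_mem_quadrant {x y : E} (hx : x ∈ quadrant α β) (hy : y ∈ quadrant α β) :
    x + y ∈ quadrant α β :=
  ⟨by simpa using add_nonneg hx.1 hy.1, by simpa using add_nonneg hx.2 hy.2⟩

theorem smul_mem_quadrant {c : 𝕜} (hc : 0 ≤ c) {x : E} (hx : x ∈ quadrant α β) :
    c • x ∈ quadrant α β :=
  ⟨by simpa using mul_nonneg hc hx.1, by simpa using mul_nonneg hc hx.2⟩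

theorem convex_quadrant : Convex 𝕜 (quadrant α β) :=
  fun _ hx _ hy _ _ ha hb _ => add_mem_quadrant (smul_mem_quadrant ha hx) (smul_mem_quadrant hb hy)

namespace CornerData

variable {P V N W : E} {ν : Set E}

theorem convexHull_subset (hc : CornerData α β P V N W ν) {t : 𝕜} (ht : 0 ≤ t) :
    convexHull 𝕜 {0, t • P, V, W} ⊆ quadrant α β := by
  refine convexHull_min ?_ convex_quadrant
  rintro z (rfl | rfl | rfl | rfl)
  · simp [quadrant]
  · exact smul_mem_quadrant ht ⟨hc.vertex_pos.le, hc.vertex_axis.ge⟩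
  · exact hc.cross_mem
  · exact hc.end_mem_quadrant

theorem mem_strip_or_mem_convexHull (hαβ : Function.Injective (α.prod β))
    (hc : CornerData α β P V N W ν) (t : 𝕜) {y : E} (hy : y ∈ quadrant α β)
    (hyV : β y ≤ β V) :
    (∃ D ∈ segment 𝕜 (t • P) V, ∃ l : 𝕜, 0 ≤ l ∧ y = D + l • N) ∨
      y ∈ convexHull 𝕜 {0, t • P, V, W} := by
  have hext : ∀ u v : E, α u = α v → β u = β v → u = v := fun u v h1 h2 =>
    hαβ (Prod.ext h1 h2)
  -- if `β V = 0` then `β y = 0`, and the junk value `θ = 0` still satisfies `hθ`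
  set θ := β y / β V
  have hθ0 : 0 ≤ θ := div_nonneg hy.2 (hy.2.trans hyV)
  have hθ1 : θ ≤ 1 := div_le_one_of_le₀ hyV (hy.2.trans hyV)
  have hθ : θ * β V = β y := div_mul_cancel_of_imp fun h => by linarith [hy.2]
  set D := (1 - θ) • (t • P) + θ • V
  have hD : D ∈ segment 𝕜 (t • P) V := ⟨1 - θ, θ, by linarith, hθ0, by ring, rfl⟩
  have hβD : β D = β y := by simp [D, hc.vertex_axis, hθ]
  rcases le_or_gt (α D) (α y) with hle | hlt
  · refine Or.inl ⟨D, hD, (α y - α D) / α N, div_nonneg (by linarith) hc.gen_pos.le, ?_⟩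
    apply hext
    · simp [div_mul_cancel₀ _ hc.gen_pos.ne']
    · simp [hc.gen_axis, hβD]
  · right
    set μ := α y / α D
    have hαD : 0 < α D := hy.1.trans_lt hlt
    have hW : θ • W ∈ convexHull 𝕜 {0, t • P, V, W} :=
      segment_subset_convexHull (x := 0) (y := W) (by simp) (by simp)
        ⟨1 - θ, θ, by linarith, hθ0, by ring, by simp⟩
    have hD' : D ∈ convexHull 𝕜 {0, t • P, V, W} :=
      segment_subset_convexHull (by simp) (by simp) hD
    refine (convex_convexHull 𝕜 _).segment_subset hW hD'
      ⟨1 - μ, μ, ?_, div_nonneg hy.1 hαD.le, by ring, ?_⟩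
    · linarith [(div_le_one hαD).2 hlt.le]
    · apply hext
      · simp [hc.end_axis, μ, div_mul_cancel₀ _ hαD.ne']
      · simp [hc.level W hc.end_mem, hβD, hθ]
        ring

end CornerData

theorem quadrant_cover {P₁ V₁ N₁ W₁ P₂ V₂ N₂ W₂ Q : E} {ν₁ ν₂ : Set E}
    (hαβ : Function.Injective (α.prod β))
    (h₁ : CornerData α β P₁ V₁ N₁ W₁ ν₁) (h₂ : CornerData β α P₂ V₂ N₂ W₂ ν₂)
    (hQ : Q ∈ ν₁ ∩ ν₂) (t₁ t₂ : 𝕜) {y : E} (hy : y ∈ quadrant α β) :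
    (∃ D ∈ segment 𝕜 (t₁ • P₁) V₁, ∃ l : 𝕜, 0 ≤ l ∧ y = D + l • N₁) ∨
      (∃ D ∈ segment 𝕜 (t₂ • P₂) V₂, ∃ l : 𝕜, 0 ≤ l ∧ y = D + l • N₂) ∨
        y ∈ convexHull 𝕜 {0, t₁ • P₁, V₁, W₁} ∨ y ∈ convexHull 𝕜 {0, t₂ • P₂, V₂, W₂} ∨
          y - Q ∈ quadrant α β := by
  have hβα : Function.Injective (β.prod α) := fun u v h =>
    hαβ (Prod.ext (congrArg Prod.snd h) (congrArg Prod.fst h))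
  by_cases hy₁ : β y ≤ β V₁
  · rcases h₁.mem_strip_or_mem_convexHull hαβ t₁ hy hy₁ with h | h <;> simp [h]
  by_cases hy₂ : α y ≤ α V₂
  · rcases h₂.mem_strip_or_mem_convexHull hβα t₂ ⟨hy.2, hy.1⟩ hy₂ with h | h <;>
      simp [h]
  refine Or.inr (Or.inr (Or.inr (Or.inr ⟨?_, ?_⟩)))
  · simpa [h₂.level Q hQ.2] using (not_le.1 hy₂).le
  · simpa [h₁.level Q hQ.1] using (not_le.1 hy₁).le

end Quadrant

theorem add_mem_segment_smul_add_one {𝕜 E : Type*} [Field 𝕜] [LinearOrder 𝕜]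
    [IsStrictOrderedRing 𝕜] [AddCommGroup E] [Module 𝕜 E] {t : 𝕜} (ht : 0 ≤ t) {p q x : E}
    (hx : x ∈ segment 𝕜 (t • p) (t • q)) :
    x + p ∈ segment 𝕜 ((t + 1) • p) ((t + 1) • q) := by
  obtain ⟨a, b, ha, hb, hab, rfl⟩ := hx
  have ht1 : t + 1 ≠ 0 := by positivity
  refine ⟨(a * t + 1) / (t + 1), b * t / (t + 1), by positivity, by positivity, ?_, ?_⟩
  · field_simp
    linear_combination t * hab
  · simp only [smul_smul, div_mul_cancel₀ _ ht1]
    module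

theorem add_mem_crossSet_succ {P1 Pt P2 V : Fin 2 → ℚ} {h : ℕ}
    (hV : V ∈ crossSet P1 Pt P2 h) : V + P1 ∈ crossSet P1 Pt P2 (h + 1) := by
  push_cast [crossSet]
  exact ⟨add_mem_segment_smul_add_one h.cast_nonneg hV.1,
    add_mem_segment_smul_add_one (by positivity) hV.2⟩

theorem IsLine.apply_eq_of_add_mem {ν : Set (Fin 2 → ℚ)} (hl : IsLine ν) {a u : Fin 2 → ℚ}
    (ha : a ∈ ν) (hau : a + u ∈ ν) (hu : u ≠ 0) {f : (Fin 2 → ℚ) →ₗ[ℚ] ℚ} (hf : f u = 0) :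
    ∀ y ∈ ν, f y = f a := by
  obtain ⟨p, d, -, rfl⟩ := hl
  obtain ⟨sa, rfl⟩ := ha
  obtain ⟨sb, hsb⟩ := hau
  have hu' : u = (sb - sa) • d := by
    rw [sub_smul, ← add_right_inj (p + sa • d), hsb]
    abel
  have hd : f d = 0 := by
    have hs : sb - sa ≠ 0 := by rintro hs; simp [hs] at hu'; exact hu hu'
    simpa [hu', hs] using hf
  rintro _ ⟨s, rfl⟩
  simp [hd]

theorem toQ_injective : Function.Injective toQ := fun x y h =>
  funext fun i => by simpa [toQ] using congrFun h i

theorem toQ_ne_zero {x : Fin 2 → ℕ} (hx : x ≠ 0) : toQ x ≠ 0 := fun h =>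
  hx (toQ_injective (h.trans (funext fun _ => by simp [toQ])))

theorem rayQ_smul {w : Fin 2 → ℚ} {c : ℚ} (hc : 0 < c) : rayQ (c • w) = rayQ w := by
  ext x
  constructor
  · rintro ⟨q, hq, rfl⟩
    exact ⟨q * c, by positivity, smul_smul q c w⟩
  · rintro ⟨q, hq, rfl⟩
    exact ⟨q / c, by positivity, by rw [smul_smul, div_mul_cancel₀ _ hc.ne']⟩

theorem apply_eq_zero_of_mem_rayQ {f : (Fin 2 → ℚ) →ₗ[ℚ] ℚ} {w z : Fin 2 → ℚ}
    (hz : z ∈ rayQ w) (hw : f w = 0) : f z = 0 := by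
  obtain ⟨q, -, rfl⟩ := hz
  simp [hw]

theorem apply_pos_of_mem_rayQ {f : (Fin 2 → ℚ) →ₗ[ℚ] ℚ} {w z : Fin 2 → ℚ}
    (hz : z ∈ rayQ w) (hz0 : z ≠ 0) (hw : 0 < f w) : 0 < f z := by
  obtain ⟨q, hq, rfl⟩ := hz
  have hq0 : q ≠ 0 := by rintro rfl; simp at hz0
  simpa using mul_pos (hq.lt_of_ne' hq0) hw

theorem subset_coneQ (G : Set (Fin 2 → ℚ)) : G ⊆ coneQ G :=
  fun g hg => ⟨1, fun _ => 1, fun _ => g, fun _ => zero_le_one, fun _ => hg, by simp⟩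

section Coordinates

variable {α β : (Fin 2 → ℚ) →ₗ[ℚ] ℚ}

theorem coneQ_subset_quadrant {G : Set (Fin 2 → ℚ)} (hG : G ⊆ quadrant α β) :
    coneQ G ⊆ quadrant α β := by
  rintro _ ⟨n, q, f, hq, hf, rfl⟩
  exact Finset.sum_induction _ (· ∈ quadrant α β) (fun _ _ => add_mem_quadrant)
    (by simp [quadrant]) fun i _ => smul_mem_quadrant (hq i) (hG (hf i))

theorem coneQ_eq_quadrant (hαβ : Function.Injective (α.prod β)) {G : Set (Fin 2 → ℚ)}
    (hG : G ⊆ quadrant α β) {u v : Fin 2 → ℚ} (hu : u ∈ G) (hv : v ∈ G) (hαu : 0 < α u)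
    (hβu : β u = 0) (hαv : α v = 0) (hβv : 0 < β v) : coneQ G = quadrant α β := by
  refine (coneQ_subset_quadrant hG).antisymm fun z hz => ?_
  refine ⟨2, ![α z / α u, β z / β v], ![u, v], ?_, ?_, ?_⟩
  · simp only [Fin.forall_fin_two, Matrix.cons_val_zero, Matrix.cons_val_one]
    exact ⟨div_nonneg hz.1 hαu.le, div_nonneg hz.2 hβv.le⟩
  · simpa [Fin.forall_fin_two] using ⟨hu, hv⟩
  · refine hαβ (Prod.ext ?_ ?_)
    · simp [Fin.sum_univ_two, hαv, div_mul_cancel₀ _ hαu.ne']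
    · simp [Fin.sum_univ_two, hβu, div_mul_cancel₀ _ hβv.ne']

end Coordinates

theorem exists_toQ_eq_nsmul {f : Fin 2 → ℚ} (hf : 0 ≤ f) :
    ∃ N : ℕ, 0 < N ∧ ∃ y : Fin 2 → ℕ, toQ y = (N : ℚ) • f := by
  have hnum : ∀ i, (((f i).num.toNat : ℕ) : ℚ) = (f i).den * f i := fun i => by
    rw [Rat.den_mul_eq_num]
    exact_mod_cast Int.toNat_of_nonneg (Rat.num_nonneg.2 (hf i))
  refine ⟨(f 0).den * (f 1).den, by positivity,
    ![(f 1).den * (f 0).num.toNat, (f 0).den * (f 1).num.toNat], ?_⟩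
  ext i
  fin_cases i <;>
  · simp [toQ, hnum, -Rat.den_mul_eq_num]
    ring

theorem subset_coneN (S : Set (Fin 2 → ℕ)) : S ⊆ coneN S :=
  fun _ hx => subset_coneQ _ (mem_image_of_mem toQ hx)

theorem subset_quadrant_of_polySG {α β : (Fin 2 → ℚ) →ₗ[ℚ] ℚ} {F : Set (Fin 2 → ℚ)}
    (hF : ∀ f ∈ F, 0 ≤ f) (hS : ∀ x ∈ polySG F, toQ x ∈ quadrant α β) : F ⊆ quadrant α β := by
  intro f hf
  obtain ⟨N, hN, y, hy⟩ := exists_toQ_eq_nsmul (hF f hf)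
  have hNf := hy ▸ hS y ⟨N, hy ▸ smul_mem_smul_set hf⟩
  simpa [smul_smul, hN.ne'] using smul_mem_quadrant (by positivity : (0 : ℚ) ≤ (N : ℚ)⁻¹) hNf

theorem ne_zero_of_polySG_inter_rayQ {F : Set (Fin 2 → ℚ)} {n v : Fin 2 → ℕ} {p : Fin 2 → ℚ}
    (hn : n ∈ polySG F) (hn0 : n ≠ 0) (hnv : n ∈ rayN v) (hF : F ∩ rayQ (toQ v) = {p}) :
    p ≠ 0 := by
  rintro rfl
  obtain ⟨i, f, hf, hfn : (i : ℚ) • f = toQ n⟩ := hn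
  obtain ⟨c, hc, hcn⟩ := hnv
  have hi : (i : ℚ) ≠ 0 := by
    rintro hi
    exact toQ_ne_zero hn0 (by rw [← hfn, hi, zero_smul])
  have hfv : f = (c / i) • toQ v := by
    rw [div_eq_inv_mul, ← smul_smul, ← hcn, ← hfn, smul_smul, inv_mul_cancel₀ hi, one_smul]
  have hf0 : f = 0 := hF.le ⟨hf, c / i, div_nonneg hc i.cast_nonneg, hfv⟩
  exact toQ_ne_zero hn0 (by rw [← hfn, hf0, smul_zero])

theorem exists_coords_of_rayN_ne {v₁ v₂ : Fin 2 → ℕ} (hv₁ : v₁ ≠ 0) (hv₂ : v₂ ≠ 0)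
    (hray : rayN v₁ ≠ rayN v₂) :
    ∃ α β : (Fin 2 → ℚ) →ₗ[ℚ] ℚ, Function.Injective (α.prod β) ∧
      0 < α (toQ v₁) ∧ β (toQ v₁) = 0 ∧ α (toQ v₂) = 0 ∧ 0 < β (toQ v₂) := by
  have hli : LinearIndependent ℚ ![toQ v₁, toQ v₂] := by
    refine (LinearIndependent.pair_iff' (toQ_ne_zero hv₁)).2 fun c hc => hray ?_
    obtain ⟨i, hi⟩ := Function.ne_iff.1 hv₁
    have hci : c * v₁ i = v₂ i := congrFun hc i
    have hc0 : 0 < c := by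
      refine lt_of_le_of_ne (nonneg_of_mul_nonneg_left (hci ▸ (v₂ i).cast_nonneg) ?_) ?_
      · exact_mod_cast Nat.pos_of_ne_zero hi
      · rintro rfl
        exact toQ_ne_zero hv₂ (by rw [← hc, zero_smul])
    ext x
    change toQ x ∈ rayQ (toQ v₁) ↔ toQ x ∈ rayQ (toQ v₂)
    rw [← hc, rayQ_smul hc0]
  let b := basisOfLinearIndependentOfCardEqFinrank hli (by simp)
  have hb : ⇑b = ![toQ v₁, toQ v₂] := coe_basisOfLinearIndependentOfCardEqFinrank hli _
  have hb₁ : toQ v₁ = b 0 := by simp [hb]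
  have hb₂ : toQ v₂ = b 1 := by simp [hb]
  refine ⟨b.coord 0, b.coord 1, fun u v h => b.ext_elem_iff.2 ?_, ?_, ?_, ?_, ?_⟩
  · simpa [Fin.forall_fin_two] using h
  all_goals simp [hb₁, hb₂]

theorem cornerData_of_crossSet {α β : (Fin 2 → ℚ) →ₗ[ℚ] ℚ} {F : Set (Fin 2 → ℚ)}
    (hF : F ⊆ quadrant α β) {w w' : Fin 2 → ℚ} (hαw : 0 < α w) (hβw : β w = 0)
    (hαw' : α w' = 0) {p pt p₂ V N W : Fin 2 → ℚ} (hp : p ∈ rayQ w) (hp0 : p ≠ 0)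
    (hpt : pt ∈ F) (hN : N ∈ rayQ w) (hN0 : N ≠ 0) {j : ℕ} (hV : V ∈ crossSet p pt p₂ j)
    {ν : Set (Fin 2 → ℚ)} (hl : IsLine ν) (hν : ∀ h, j ≤ h → crossSet p pt p₂ h ⊆ ν)
    (hW : W ∈ ν ∩ rayQ w') : CornerData α β p V N W ν where
  vertex_pos := apply_pos_of_mem_rayQ hp hp0 hαw
  vertex_axis := apply_eq_zero_of_mem_rayQ hp hβw
  cross_mem := by
    have hp' : p ∈ quadrant α β :=
      ⟨(apply_pos_of_mem_rayQ hp hp0 hαw).le, (apply_eq_zero_of_mem_rayQ hp hβw).ge⟩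
    exact convex_quadrant.segment_subset (smul_mem_quadrant j.cast_nonneg hp')
      (smul_mem_quadrant j.cast_nonneg (hF hpt)) hV.1
  gen_pos := apply_pos_of_mem_rayQ hN hN0 hαw
  gen_axis := apply_eq_zero_of_mem_rayQ hN hβw
  end_axis := apply_eq_zero_of_mem_rayQ hW.2 hαw'
  end_mem := hW.1
  level := hl.apply_eq_of_add_mem (hν j le_rfl hV)
    (hν (j + 1) j.le_succ (add_mem_crossSet_succ hV)) hp0 (apply_eq_zero_of_mem_rayQ hp hβw)

theorem eq_union_of_cornerData {C : Set (Fin 2 → ℕ)} {F : Set (Fin 2 → ℚ)}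
    {α β : (Fin 2 → ℚ) →ₗ[ℚ] ℚ} (hαβ : Function.Injective (α.prod β))
    (hC : ∀ x, x ∈ C ↔ toQ x ∈ quadrant α β) (hF : coneQ F = quadrant α β)
    {P₁ V₁ W₁ P₂ V₂ W₂ Q : Fin 2 → ℚ} {n₁ n₂ : Fin 2 → ℕ} {ν₁ ν₂ : Set (Fin 2 → ℚ)}
    (h₁ : CornerData α β P₁ V₁ (toQ n₁) W₁ ν₁) (h₂ : CornerData β α P₂ V₂ (toQ n₂) W₂ ν₂)
    (hQ : Q ∈ ν₁ ∩ ν₂) (j₁ j₂ : ℕ) :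
    C = stripB P₁ V₁ j₁ n₁ C ∪ stripB P₂ V₂ j₂ n₂ C ∪ Ups j₁ P₁ V₁ W₁ ∪ Ups j₂ P₂ V₂ W₂ ∪
      UpsMain Q F := by
  ext x
  simp only [mem_union]
  constructor
  · intro hx
    rcases quadrant_cover hαβ h₁ h₂ hQ (j₁ : ℚ) j₂ ((hC x).1 hx) with h | h | h | h | h
    · exact Or.inl (Or.inl (Or.inl (Or.inl ⟨h, hx⟩)))
    · exact Or.inl (Or.inl (Or.inl (Or.inr ⟨h, hx⟩)))
    · exact Or.inl (Or.inl (Or.inr h))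
    · exact Or.inl (Or.inr h)
    · exact Or.inr ⟨toQ x - Q, hF ▸ h, by abel⟩
  · rintro ((((h | h) | h) | h) | ⟨z, hz, hxz⟩)
    · exact h.2
    · exact h.2
    · exact (hC x).2 (h₁.convexHull_subset j₁.cast_nonneg h)
    · have hx := h₂.convexHull_subset j₂.cast_nonneg h
      exact (hC x).2 ⟨hx.2, hx.1⟩
    · exact (hC x).2 (hxz ▸ add_mem_quadrant (h₁.mem_quadrant_of_mem_inter h₂ hQ) (hF ▸ hz))

theorem stmt15_general
    (t : ℕ) (P : Fin t → (Fin 2 → ℚ)) (hpos : ∀ j i, 0 ≤ P j i)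
    (i1 it i2 d1 e1 e2 : Fin t)
    (S : Set (Fin 2 → ℕ)) (hS : S = polySG (convexHull ℚ (Set.range P)))
    (v1 v2 : Fin 2 → ℕ) (hsimp : Simplicial S v1 v2)
    (hP1 : convexHull ℚ (Set.range P) ∩ rayQ (toQ v1) = {P i1})
    (hPd : convexHull ℚ (Set.range P) ∩ rayQ (toQ v2) = {P d1})
    (j1 j2 : ℕ)
    (V1 V2 : Fin 2 → ℚ)
    (hV1 : crossSet (P i1) (P it) (P i2) j1 = {V1})
    (hV2 : crossSet (P d1) (P e1) (P e2) j2 = {V2})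
    (n1 n2 : Fin 2 → ℕ)
    (hn1 : IsMinOnRay S (rayN v1) n1) (hn2 : IsMinOnRay S (rayN v2) n2)
    (nu1 nu2 : Set (Fin 2 → ℚ)) (hl1 : IsLine nu1) (hl2 : IsLine nu2)
    (hnu1 : ∀ h : ℕ, j1 ≤ h → crossSet (P i1) (P it) (P i2) h ⊆ nu1)
    (hnu2 : ∀ h : ℕ, j2 ≤ h → crossSet (P d1) (P e1) (P e2) h ⊆ nu2)
    (W1 W2 : Fin 2 → ℚ)
    (hW1 : nu1 ∩ rayQ (toQ v2) = {W1}) (hW2 : nu2 ∩ rayQ (toQ v1) = {W2})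
    (Qpt : Fin 2 → ℚ) (hQ : nu1 ∩ nu2 = {Qpt})
    :
    coneN S =
      stripB (P i1) V1 j1 n1 (coneN S) ∪ stripB (P d1) V2 j2 n2 (coneN S) ∪
        Ups j1 (P i1) V1 W1 ∪ Ups j2 (P d1) V2 W2 ∪
          UpsMain Qpt (convexHull ℚ (Set.range P)) := by
  obtain ⟨hv1, hv2, hray, hcone⟩ := hsimp
  obtain ⟨α, β, hαβ, hα1, hβ1, hα2, hβ2⟩ := exists_coords_of_rayN_ne hv1 hv2 hray
  have hC : ∀ x, x ∈ coneN S ↔ toQ x ∈ quadrant α β := by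
    have hpair : {toQ v1, toQ v2} ⊆ quadrant α β := by
      rintro _ (rfl | rfl)
      exacts [⟨hα1.le, hβ1.ge⟩, ⟨hα2.ge, hβ2.le⟩]
    intro x
    rw [← coneQ_eq_quadrant hαβ hpair (mem_insert _ _) (mem_insert_of_mem _ (mem_singleton _))
      hα1 hβ1 hα2 hβ2, ← hcone]
    rfl
  have hF : convexHull ℚ (range P) ⊆ quadrant α β :=
    subset_quadrant_of_polySG (fun _ hf => convexHull_min (range_subset_iff.2 hpos)
      (convex_Ici 0) hf) fun x hx => (hC x).1 (subset_coneN S (hS ▸ hx))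
  have h₁ : CornerData α β (P i1) V1 (toQ n1) W1 nu1 :=
    cornerData_of_crossSet hF hα1 hβ1 hα2 (hP1.ge rfl).2
      (ne_zero_of_polySG_inter_rayQ (hS ▸ hn1.1.1) hn1.2.1 hn1.1.2 hP1)
      (subset_convexHull ℚ _ (mem_range_self it)) hn1.1.2 (toQ_ne_zero hn1.2.1) (hV1.ge rfl)
      hl1 hnu1 (hW1.ge rfl)
  have h₂ : CornerData β α (P d1) V2 (toQ n2) W2 nu2 :=
    cornerData_of_crossSet (fun _ hf => ⟨(hF hf).2, (hF hf).1⟩) hβ2 hα2 hβ1 (hPd.ge rfl).2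
      (ne_zero_of_polySG_inter_rayQ (hS ▸ hn2.1.1) hn2.2.1 hn2.1.2 hPd)
      (subset_convexHull ℚ _ (mem_range_self e1)) hn2.1.2 (toQ_ne_zero hn2.2.1) (hV2.ge rfl)
      hl2 hnu2 (hW2.ge rfl)
  exact eq_union_of_cornerData hαβ hC
    (coneQ_eq_quadrant hαβ hF (subset_convexHull ℚ _ (mem_range_self i1))
      (subset_convexHull ℚ _ (mem_range_self d1)) h₁.vertex_pos h₁.vertex_axis
      h₂.vertex_axis h₂.vertex_pos) h₁ h₂ (hQ.ge rfl) j1 j2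

/-- With the regions `ℬ_1, ℬ_2, Υ_1, Υ_2, Υ` defined from the
boundary structure of the dilations of `F` (here in the case where `F` meets each
extremal ray in a single vertex), the cone satisfies
`𝒞 = ℬ_1 ∪ ℬ_2 ∪ Υ_1 ∪ Υ_2 ∪ Υ`. -/
theorem stmt15
    (t : ℕ) (P : Fin t → (Fin 2 → ℚ)) (hpos : ∀ j i, 0 ≤ P j i)
    (i1 it i2 d1 e1 e2 : Fin t)
    (S : Set (Fin 2 → ℕ)) (hS : S = polySG (convexHull ℚ (Set.range P)))
    (G : Finset (Fin 2 → ℕ)) (hG : minimalGenSet S G)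
    (v1 v2 : Fin 2 → ℕ) (hsimp : Simplicial S v1 v2)
    (hP1 : convexHull ℚ (Set.range P) ∩ rayQ (toQ v1) = {P i1})
    (hPd : convexHull ℚ (Set.range P) ∩ rayQ (toQ v2) = {P d1})
    (hedge1 : IsExtreme ℚ (convexHull ℚ (Set.range P)) (segment ℚ (P i1) (P it)))
    (hedge2 : IsExtreme ℚ (convexHull ℚ (Set.range P)) (segment ℚ (P i1) (P i2)))
    (hedge3 : IsExtreme ℚ (convexHull ℚ (Set.range P)) (segment ℚ (P d1) (P e1)))
    (hedge4 : IsExtreme ℚ (convexHull ℚ (Set.range P)) (segment ℚ (P d1) (P e2)))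
    (j1 j2 : ℕ) (hj1 : 0 < j1) (hj2 : 0 < j2)
    (hj1le : ∀ j' : ℕ, 0 < j' → (crossSet (P i1) (P it) (P i2) j').Nonempty → j1 ≤ j')
    (hj2le : ∀ j' : ℕ, 0 < j' → (crossSet (P d1) (P e1) (P e2) j').Nonempty → j2 ≤ j')
    (V1 V2 : Fin 2 → ℚ)
    (hV1 : crossSet (P i1) (P it) (P i2) j1 = {V1})
    (hV2 : crossSet (P d1) (P e1) (P e2) j2 = {V2})
    (n1 n2 : Fin 2 → ℕ)
    (hn1 : IsMinOnRay S (rayN v1) n1) (hn2 : IsMinOnRay S (rayN v2) n2)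
    (nu1 nu2 : Set (Fin 2 → ℚ)) (hl1 : IsLine nu1) (hl2 : IsLine nu2)
    (hnu1 : ∀ h : ℕ, j1 ≤ h → crossSet (P i1) (P it) (P i2) h ⊆ nu1)
    (hnu2 : ∀ h : ℕ, j2 ≤ h → crossSet (P d1) (P e1) (P e2) h ⊆ nu2)
    (W1 W2 : Fin 2 → ℚ)
    (hW1 : nu1 ∩ rayQ (toQ v2) = {W1}) (hW2 : nu2 ∩ rayQ (toQ v1) = {W2})
    (Qpt : Fin 2 → ℚ) (hQ : nu1 ∩ nu2 = {Qpt})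
    :
    coneN S =
      stripB (P i1) V1 j1 n1 (coneN S) ∪ stripB (P d1) V2 j2 n2 (coneN S) ∪
        Ups j1 (P i1) V1 W1 ∪ Ups j2 (P d1) V2 W2 ∪
          UpsMain Qpt (convexHull ℚ (Set.range P)) :=
  stmt15_general t P hpos i1 it i2 d1 e1 e2 S hS v1 v2 hsimp hP1 hPd j1 j2 V1 V2 hV1 hV2 n1 n2 hn1
    hn2 nu1 nu2 hl1 hl2 hnu1 hnu2 W1 W2 hW1 hW2 Qpt hQ
end
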